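/- arXiv:0912.3749 — 5 statements merged into one kernel-verified Lean document; each statement's English description precedes it below -/
import Mathlib

section
/- For a sphere congruence σ(s) = k(s)·m(s) + n(s) tangent to a surface M along a curve C with Darboux frame (T,N₁,n), where m' = T, T involves geodesic curvature data, and n' = -k_n T - τ_g N₁: the squared Lorentz norm of σ' satisfies L(σ',σ') = (k - k_n)² + τ_g², so among all families of tangent spheres along C (parametrized by the function k(s)), the canonical family k = k_n has minimal speed |σ'| = |τ_g| pointwise, and it is the unique family of critical length. -/
/-- The Lorentz bilinear form on ℝ⁵. -/
noncomputable def LorentzForm (u v : Fin 5 → ℝ) : ℝ :=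
  -(u 0 * v 0) + u 1 * v 1 + u 2 * v 2 + u 3 * v 3 + u 4 * v 4

/-- For a family of tangent spheres σ = k·m + n along a curve with Darboux frame
(T,N₁,n), the derivative σ' = k'·m + (k - k_n)·T - τ_g·N₁ satisfies
L(σ',σ') = (k-k_n)² + τ_g²; hence it is pointwise ≥ τ_g², with equality iff k = k_n:
the canonical family is the unique one of minimal (critical) length. -/
theorem stmt6 (m T N₁ n : Fin 5 → ℝ) (k k' kn τg : ℝ)
    (hmm : LorentzForm m m = 0) (hmT : LorentzForm m T = 0)
    (hmN : LorentzForm m N₁ = 0) (hmn : LorentzForm m n = 0)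
    (hTT : LorentzForm T T = 1) (hNN : LorentzForm N₁ N₁ = 1)
    (hnn : LorentzForm n n = 1)
    (hTN : LorentzForm T N₁ = 0) (hTn : LorentzForm T n = 0)
    (hNn : LorentzForm N₁ n = 0) :
    LorentzForm (k' • m + (k - kn) • T - τg • N₁) (k' • m + (k - kn) • T - τg • N₁)
        = (k - kn) ^ 2 + τg ^ 2 ∧
      τg ^ 2 ≤ (k - kn) ^ 2 + τg ^ 2 ∧
      ((k - kn) ^ 2 + τg ^ 2 = τg ^ 2 ↔ k = kn) := by
  simp only [LorentzForm, Pi.add_apply, Pi.sub_apply, Pi.smul_apply, smul_eq_mul] at *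
  refine ⟨by linear_combination k'^2*hmm + 2*k'*(k-kn)*hmT - 2*k'*τg*hmN + (k-kn)^2*hTT + τg^2*hNN - 2*(k-kn)*τg*hTN, by nlinarith [sq_nonneg (k-kn)], ?_⟩
  constructor
  · intro h
    have : (k - kn) ^ 2 = 0 := by linarith
    have := pow_eq_zero_iff (n := 2) (by norm_num) |>.mp this
    linarith
  · intro h; subst h; ring
end

section
/- For a cone parametrized by X(u,v) = v·γ(u) where γ is a unit-speed spherical curve (|γ| = 1, |γ'| = 1) with geodesic curvature k_g(u) (so γ'' = -γ + k_g γ∧γ'), the principal curvatures are k₁(u,v) = k_g(u)/v and k₂(u,v) = 0, and the function I(u,α) = k_g(u)cos³α is a first integral of the Darboux curves, which satisfy tanα·dα = (1/3)(k_g'/k_g)du. -/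
open Real

noncomputable section

/-- Euclidean dot product on ℝ³. -/
def dot3 (x y : Fin 3 → ℝ) : ℝ := x 0 * y 0 + x 1 * y 1 + x 2 * y 2

theorem aux_ortho (γ : ℝ → Fin 3 → ℝ) (hγ : ContDiff ℝ (⊤ : ℕ∞) γ)
    (h1 : ∀ x, dot3 (γ x) (γ x) = 1) : ∀ x, dot3 (γ x) (deriv γ x) = 0 := by
  intro x
  have hd : Differentiable ℝ γ := hγ.differentiable (by simp)
  have hcomp : ∀ i, HasDerivAt (fun x => γ x i) (deriv γ x i) x := by
    intro i
    exact hasDerivAt_pi.1 (hd x).hasDerivAt i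
  have hf : HasDerivAt (fun x => dot3 (γ x) (γ x))
      (2 * dot3 (γ x) (deriv γ x)) x := by
    have := (((hcomp 0).mul (hcomp 0)).add ((hcomp 1).mul (hcomp 1))).add
      ((hcomp 2).mul (hcomp 2))
    simp only [dot3]
    exact this.congr_deriv (by ring)
  have hconst : HasDerivAt (fun x => dot3 (γ x) (γ x)) 0 x := by
    have : (fun x => dot3 (γ x) (γ x)) = fun _ => (1:ℝ) := funext h1
    rw [this]; exact hasDerivAt_const x 1
  have := hf.unique hconst
  linarith

/-- Proposition 29: for the cone X(u,v) = v·γ(u) over a unit-speed spherical curve γ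
(|γ| = 1, |γ'| = 1, γ'' = -γ + k_g·γ×γ', normal N = γ×γ'), the principal curvatures
are e/E = k_g(u)/v and g/G = 0, and I(u,α) = k_g(u)cos³α is a first integral of the
Darboux curves, which satisfy tanα·α' = (1/3)k_g'/k_g. -/
theorem stmt14 (γ : ℝ → Fin 3 → ℝ) (kg : ℝ → ℝ)
    (hγ : ContDiff ℝ (⊤ : ℕ∞) γ) (hkg : Differentiable ℝ kg) (hkgne : ∀ x, kg x ≠ 0)
    (h1 : ∀ x, dot3 (γ x) (γ x) = 1)
    (h2 : ∀ x, dot3 (deriv γ x) (deriv γ x) = 1)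
    (h3 : ∀ x, iteratedDeriv 2 γ x = -γ x + kg x • (crossProduct (γ x) (deriv γ x))) :
    (∀ u v : ℝ, 0 < v →
      dot3 (iteratedDeriv 2 (fun x => v • γ x) u) (crossProduct (γ u) (deriv γ u)) /
          dot3 (deriv (fun x => v • γ x) u) (deriv (fun x => v • γ x) u) = kg u / v ∧
      dot3 (iteratedDeriv 2 (fun y : ℝ => y • γ u) v) (crossProduct (γ u) (deriv γ u)) /
          dot3 (deriv (fun y : ℝ => y • γ u) v) (deriv (fun y : ℝ => y • γ u) v) = 0) ∧
    (∀ α : ℝ → ℝ, Differentiable ℝ α →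
      (∀ x, (sin (α x) / cos (α x)) * deriv α x = (1/3) * (deriv kg x / kg x)) →
      ∀ x, deriv (fun t => kg t * cos (α t) ^ 3) x = 0) := by
  have hd : Differentiable ℝ γ := hγ.differentiable (by simp)
  have hd' : Differentiable ℝ (deriv γ) :=
    ((contDiff_infty_iff_deriv.mp (hγ.of_le (by simp))).2).differentiable (by simp)
  have h4 := aux_ortho γ hγ h1
  have h2d : ∀ f : ℝ → Fin 3 → ℝ, iteratedDeriv 2 f = deriv (deriv f) := by
    intro f
    rw [show (2:ℕ) = 1 + 1 from rfl, iteratedDeriv_succ, iteratedDeriv_one]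
  constructor
  · intro u v hv
    have hderiv : deriv (fun x => v • γ x) = fun x => v • deriv γ x := by
      funext x
      exact deriv_const_smul v (hd x)
    have hit2 : iteratedDeriv 2 (fun x => v • γ x) u = v • iteratedDeriv 2 γ u := by
      rw [h2d, h2d, hderiv]
      exact deriv_const_smul v (hd' u)
    constructor
    · rw [hit2, hderiv, h3]
      have e1 : dot3 (γ u) (crossProduct (γ u) (deriv γ u)) = 0 := by
        simp [dot3, cross_apply]; ring
      have e2 : dot3 (crossProduct (γ u) (deriv γ u)) (crossProduct (γ u) (deriv γ u))
          = dot3 (γ u) (γ u) * dot3 (deriv γ u) (deriv γ u)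
            - dot3 (γ u) (deriv γ u) ^ 2 := by
        simp [dot3, cross_apply]; ring
      have eN : dot3 (crossProduct (γ u) (deriv γ u)) (crossProduct (γ u) (deriv γ u)) = 1 := by
        rw [e2, h1, h2, h4]; ring
      have num : dot3 (v • (-γ u + kg u • (crossProduct (γ u) (deriv γ u))))
          (crossProduct (γ u) (deriv γ u)) = v * kg u := by
        simp only [dot3, Pi.smul_apply, Pi.add_apply, Pi.neg_apply, smul_eq_mul] at e1 eN ⊢
        linear_combination (-v) * e1 + (v * kg u) * eN
      have den : dot3 (v • deriv γ u) (v • deriv γ u) = v ^ 2 := by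
        have hh := h2 u
        simp only [dot3, Pi.smul_apply, smul_eq_mul] at hh ⊢
        linear_combination (v ^ 2) * hh
      rw [num, den]
      field_simp
    · have hder1 : deriv (fun y : ℝ => y • γ u) = fun _ => γ u := by
        funext y
        have : HasDerivAt (fun y : ℝ => y • γ u) ((1:ℝ) • γ u) y := by
          simpa using (hasDerivAt_id y).smul_const (γ u)
        simpa using this.deriv
      have hit2' : iteratedDeriv 2 (fun y : ℝ => y • γ u) v = 0 := by
        rw [h2d, hder1]
        simp
      rw [hit2']
      simp [dot3]
  · intro α hα hode x
    have hc : HasDerivAt (fun t => kg t * cos (α t) ^ 3)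
        (deriv kg x * cos (α x) ^ 3
          + kg x * (3 * cos (α x) ^ 2 * (-sin (α x) * deriv α x))) x := by
      have h1' : HasDerivAt kg (deriv kg x) x := (hkg x).hasDerivAt
      have h2' : HasDerivAt (fun t => cos (α t)) (-sin (α x) * deriv α x) x := by
        simpa [mul_comm, Function.comp_def] using (Real.hasDerivAt_cos (α x)).comp x (hα x).hasDerivAt
      have h3' : HasDerivAt (fun t => cos (α t) ^ 3)
          (3 * cos (α x) ^ 2 * (-sin (α x) * deriv α x)) x := by
        simpa [Pi.pow_def] using h2'.pow 3
      exact h1'.mul h3'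
    rw [hc.deriv]
    rcases eq_or_ne (cos (α x)) 0 with hcz | hcz
    · have := hode x
      rw [hcz] at this
      simp at this
      have hkd : deriv kg x = 0 := by
        rcases this with h | h
        · exact h
        · exact absurd h (hkgne x)
      rw [hcz, hkd]; ring
    · have := hode x
      have hkx := hkgne x
      field_simp at this
      -- this : sin (α x) * deriv α x * (3 * kg x) = deriv kg x * cos (α x)  (roughly)
      nlinarith [this, sq_nonneg (cos (α x)), sq_nonneg (sin (α x))]

end
end

section
/- The function I(u,v,α) = cos²α/u + sin²α/v is a first integral of the Darboux flow on a quadric: along solutions of u' = (cosα/√E)cosα sinα, v' = (sinα/√G)cosα sinα, α' = (r₁/√E)cos³α + (r₂/√G)sin³α with r₁ = v/(2u(u-v)), r₂ = u/(2v(u-v)), one has dI/ds = 0. -/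
open Real

private lemma key16 (U V C S x y : ℝ) (hU : U ≠ 0) (hV : V ≠ 0) (h0 : U - V ≠ 0) :
    (2 * C * (-S * (V / (2 * U * (U - V)) / x * C ^ 3 + U / (2 * V * (U - V)) / y * S ^ 3)) * U
        - C ^ 2 * (1 / x * C ^ 2 * S)) / U ^ 2 +
      (2 * S * (C * (V / (2 * U * (U - V)) / x * C ^ 3 + U / (2 * V * (U - V)) / y * S ^ 3)) * V
        - S ^ 2 * (1 / y * C * S ^ 2)) / V ^ 2 = 0 := by
  rcases eq_or_ne x 0 with hx | hx <;> rcases eq_or_ne y 0 with hy | hy <;>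
    field_simp [hx, hy, hU, hV, h0] <;> ring

/-- Propositions 31–32: I(u,v,α) = cos²α/u + sin²α/v is a first integral of the
Darboux vector field u' = (1/√E)cos²α sinα, v' = (1/√G)cosα sin²α,
α' = (r₁/√E)cos³α + (r₂/√G)sin³α on a quadric in confocal coordinates, where
r₁ = v/(2u(u-v)), r₂ = u/(2v(u-v)), E = (v-u)u/(4H(u)), G = (u-v)v/(4H(v)). -/
theorem stmt16 (a b c : ℝ) (u v α : ℝ → ℝ)
    (hu : Differentiable ℝ u) (hv : Differentiable ℝ v) (hα : Differentiable ℝ α)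
    (hune : ∀ s, u s ≠ 0) (hvne : ∀ s, v s ≠ 0) (huv : ∀ s, u s ≠ v s)
    (H : ℝ → ℝ) (hH : ∀ x, H x = (x - a) * (x - b) * (x - c))
    (E G : ℝ → ℝ)
    (hE : ∀ s, E s = (v s - u s) * u s / (4 * H (u s)))
    (hG : ∀ s, G s = (u s - v s) * v s / (4 * H (v s)))
    (hueq : ∀ s, deriv u s = (1 / Real.sqrt (E s)) * cos (α s) ^ 2 * sin (α s))
    (hveq : ∀ s, deriv v s = (1 / Real.sqrt (G s)) * cos (α s) * sin (α s) ^ 2)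
    (hαeq : ∀ s, deriv α s =
        (v s / (2 * u s * (u s - v s)) / Real.sqrt (E s)) * cos (α s) ^ 3 +
        (u s / (2 * v s * (u s - v s)) / Real.sqrt (G s)) * sin (α s) ^ 3) :
    ∀ s, deriv (fun t => cos (α t) ^ 2 / u t + sin (α t) ^ 2 / v t) s = 0 := by
  intro s
  have hus := (hu s).hasDerivAt
  have hvs := (hv s).hasDerivAt
  have has := (hα s).hasDerivAt
  have hc : HasDerivAt (fun t => Real.cos (α t)) (-Real.sin (α s) * deriv α s) s :=
    (Real.hasDerivAt_cos (α s)).comp s has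
  have hsn : HasDerivAt (fun t => Real.sin (α t)) (Real.cos (α s) * deriv α s) s :=
    (Real.hasDerivAt_sin (α s)).comp s has
  have h1 : HasDerivAt (fun t => Real.cos (α t) ^ 2)
      (2 * Real.cos (α s) * (-Real.sin (α s) * deriv α s)) s := by
    have := hc.fun_pow 2
    simpa [mul_comm, mul_assoc, mul_left_comm] using this
  have h2 : HasDerivAt (fun t => Real.sin (α t) ^ 2)
      (2 * Real.sin (α s) * (Real.cos (α s) * deriv α s)) s := by
    have := hsn.fun_pow 2
    simpa [mul_comm, mul_assoc, mul_left_comm] using this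
  have hd1 := h1.fun_div hus (hune s)
  have hd2 := h2.fun_div hvs (hvne s)
  have hD := (hd1.fun_add hd2).deriv
  rw [hD, hueq s, hveq s, hαeq s]
  have h0 : u s - v s ≠ 0 := sub_ne_zero.mpr (huv s)
  exact key16 _ _ _ _ _ _ (hune s) (hvne s) h0
end

section
/- On a quadric in confocal coordinates, a tangent direction [du : dv] satisfies the Darboux condition I = 1/λ, i.e. normal curvature k_n(u,v,[du:dv]) = (e du² + g dv²)/(E du² + G dv²) = (1/λ)√(abc/(uv)), if and only if (u-λ)H(v)du² - (v-λ)H(u)dv² = 0, where H(x) = (x-a)(x-b)(x-c). -/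
open Real

/-- Proposition 33: on a quadric in confocal coordinates, a direction [du : dv]
has normal curvature (e du² + g dv²)/(E du² + G dv²) = (1/λ)√(abc/(uv)) if and only if
(u-λ)H(v)du² = (v-λ)H(u)dv², where H(x) = (x-a)(x-b)(x-c). -/
theorem stmt18 (a b c lam u v du dv : ℝ)
    (H : ℝ → ℝ) (hH : ∀ x, H x = (x - a) * (x - b) * (x - c))
    (huv : u ≠ v) (hHu : H u ≠ 0) (hHv : H v ≠ 0) (hlam : lam ≠ 0)
    (habcuv : 0 < a * b * c / (u * v))
    (hdudv : (du, dv) ≠ (0, 0))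
    (E G e g : ℝ)
    (hE : E = (v - u) * u / (4 * H u)) (hG : G = (u - v) * v / (4 * H v))
    (he : e = ((v - u) / (4 * H u)) * Real.sqrt (a * b * c / (u * v)))
    (hg : g = ((u - v) / (4 * H v)) * Real.sqrt (a * b * c / (u * v)))
    (hnd : E * du ^ 2 + G * dv ^ 2 ≠ 0) :
    (e * du ^ 2 + g * dv ^ 2) * lam =
        Real.sqrt (a * b * c / (u * v)) * (E * du ^ 2 + G * dv ^ 2) ↔
      (u - lam) * H v * du ^ 2 = (v - lam) * H u * dv ^ 2 := by
  set s := Real.sqrt (a * b * c / (u * v)) with hs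
  have hspos : 0 < s := Real.sqrt_pos.mpr habcuv
  have hsne : s ≠ 0 := ne_of_gt hspos
  have hvu : v - u ≠ 0 := sub_ne_zero.mpr (Ne.symm huv)
  subst hE hG he hg
  constructor
  · intro h
    field_simp at h
    have h2 : lam * ((v - u) * H v * du ^ 2 + (u - v) * H u * dv ^ 2) * s
        = ((v - u) * u * H v * du ^ 2 + (u - v) * v * H u * dv ^ 2) * s := by
      nlinarith [h, sq_nonneg s, sq_nonneg du, sq_nonneg dv]
    have h3 := mul_right_cancel₀ hsne h2
    have h4 : (v - u) * ((u - lam) * H v * du ^ 2)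
        = (v - u) * ((v - lam) * H u * dv ^ 2) := by ring_nf; ring_nf at h3; linarith
    exact mul_left_cancel₀ hvu h4
  · intro h
    field_simp
    linear_combination (u-v) * h
end

section
/- Let the surface be given as a graph z = h(u,v) with h(u,v) = (k₁/2)u² + (k₂/2)v² + (a/6)u³ + (d/2)u²v + (b/2)uv² + (c/6)v³ + (A/24)u⁴ + higher order terms, with k₁ ≠ k₂. Then the principal curvature function along the u-principal direction satisfies k₁(u,0) = k₁ + a·u + (1/2)(A - 3k₁³ + 2d²/(k₁-k₂))u² + O(u³); in particular the origin is a ridge point for the first principal foliation (∂k₁/∂u(0,0) = 0) if and only if a = 0, and in that case the ridge invariant is σ₁ = (A - 3k₁³)/(k₁-k₂) + 2d²/(k₁-k₂)². -/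
open Real Asymptotics

noncomputable section

/-- ∂h/∂u along the u-axis. -/
def pu (h : ℝ → ℝ → ℝ) (u : ℝ) : ℝ := deriv (fun x => h x 0) u

/-- ∂h/∂v along the u-axis. -/
def pv (h : ℝ → ℝ → ℝ) (u : ℝ) : ℝ := deriv (fun y => h u y) 0

/-- ∂²h/∂u² along the u-axis. -/
def puu (h : ℝ → ℝ → ℝ) (u : ℝ) : ℝ := iteratedDeriv 2 (fun x => h x 0) u

/-- ∂²h/∂u∂v along the u-axis. -/
def puv (h : ℝ → ℝ → ℝ) (u : ℝ) : ℝ := deriv (fun y => deriv (fun x => h x y) u) 0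

/-- ∂²h/∂v² along the u-axis. -/
def pvv (h : ℝ → ℝ → ℝ) (u : ℝ) : ℝ := iteratedDeriv 2 (fun y => h u y) 0

/-- √(1 + h_u² + h_v²) along the u-axis. -/
def Wg (h : ℝ → ℝ → ℝ) (u : ℝ) : ℝ := Real.sqrt (1 + pu h u ^ 2 + pv h u ^ 2)



lemma iterDeriv_sub {f g : ℝ → ℝ} (hf : ContDiff ℝ (⊤ : ℕ∞) f) (hg : ContDiff ℝ (⊤ : ℕ∞) g) (k : ℕ) :
    iteratedDeriv k (fun t => f t - g t) = fun t => iteratedDeriv k f t - iteratedDeriv k g t := by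
  induction k generalizing f g with
  | zero => simp [iteratedDeriv_zero]
  | succ k ih =>
    have hf' : ContDiff ℝ (⊤ : ℕ∞) (deriv f) := (contDiff_infty_iff_deriv.mp hf).2
    have hg' : ContDiff ℝ (⊤ : ℕ∞) (deriv g) := (contDiff_infty_iff_deriv.mp hg).2
    rw [iteratedDeriv_succ', iteratedDeriv_succ' (f := f), iteratedDeriv_succ' (f := g)]
    have : deriv (fun t => f t - g t) = fun t => deriv f t - deriv g t := by
      funext t
      exact deriv_fun_sub (hf.differentiable (by simp) t) (hg.differentiable (by simp) t)
    rw [this, ih hf' hg']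

lemma iterDeriv_const_mul_pow : ∀ (k : ℕ) (c : ℝ) (m : ℕ), k ≤ m →
    iteratedDeriv k (fun t : ℝ => c * t ^ m) =
      fun t => (c * (m.descFactorial k)) * t ^ (m - k) := by
  intro k
  induction k with
  | zero => intro c m _; simp
  | succ k ih =>
    intro c m hm
    obtain ⟨m, rfl⟩ : ∃ m', m = m' + 1 := ⟨m - 1, by omega⟩
    rw [iteratedDeriv_succ']
    have hd : deriv (fun t : ℝ => c * t ^ (m + 1)) = fun t => (c * (m + 1)) * t ^ m := by
      funext t
      have := ((hasDerivAt_pow (m + 1) t).const_mul c).deriv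
      rw [this]; push_cast; ring
    rw [hd, ih (c * (m + 1)) m (by omega)]
    funext t
    rw [Nat.succ_descFactorial_succ]
    push_cast
    ring

lemma iterDeriv_const_mul_pow_zero (c : ℝ) (k m : ℕ) (h : k < m) :
    iteratedDeriv k (fun t : ℝ => c * t ^ m) 0 = 0 := by
  rw [iterDeriv_const_mul_pow k c m h.le]
  simp [Nat.sub_ne_zero_of_lt h, zero_pow]

lemma iterDeriv_const_mul_pow_self (c : ℝ) (m : ℕ) :
    iteratedDeriv m (fun t : ℝ => c * t ^ m) 0 = c * m.factorial := by
  rw [iterDeriv_const_mul_pow m c m le_rfl]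
  simp [Nat.descFactorial_self]



lemma smooth_deriv {f : ℝ → ℝ} (hf : ContDiff ℝ (⊤ : ℕ∞) f) : ContDiff ℝ (⊤ : ℕ∞) (deriv f) :=
  (contDiff_infty_iff_deriv.mp hf).2

lemma diffAll {f : ℝ → ℝ} (hf : ContDiff ℝ (⊤ : ℕ∞) f) : Differentiable ℝ f :=
  hf.differentiable (by simp)

/-- Mean value bound on the segment from 0 to t, both signs. -/
lemma mvt_bound {g : ℝ → ℝ} (hg : Differentiable ℝ g) (hg0 : g 0 = 0) {Cb t : ℝ}
    (hb : ∀ x : ℝ, |x| ≤ |t| → ‖deriv g x‖ ≤ Cb) : ‖g t‖ ≤ Cb * |t| := by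
  rcases le_or_gt 0 t with h | h
  · have := norm_image_sub_le_of_norm_deriv_le_segment' (f := g) (f' := deriv g) (a := 0) (b := t)
      (fun x _ => (hg x).hasDerivAt.hasDerivWithinAt)
      (fun x hx => hb x (by rw [abs_of_nonneg hx.1, abs_of_nonneg h]; exact hx.2.le))
      t (Set.right_mem_Icc.mpr h)
    simpa [hg0, abs_of_nonneg h] using this
  · have hGd : ∀ x : ℝ, HasDerivAt (fun s => g (-s)) (-(deriv g (-x))) x := by
      intro x
      have := ((hg (-x)).hasDerivAt.comp x (hasDerivAt_neg x))
      simpa [Function.comp_def, mul_comm] using this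
    have := norm_image_sub_le_of_norm_deriv_le_segment'
      (f := fun s => g (-s)) (f' := fun x => -(deriv g (-x))) (a := 0) (b := -t)
      (fun x _ => (hGd x).hasDerivWithinAt)
      (fun x hx => by
        rw [norm_neg]
        exact hb (-x) (by rw [abs_neg, abs_of_nonneg hx.1, abs_of_neg h]; linarith [hx.2]))
      (-t) (Set.right_mem_Icc.mpr (by linarith))
    simp only [neg_neg, neg_zero, hg0, sub_zero] at this
    simpa [abs_of_neg h] using this

lemma peano : ∀ (n : ℕ) (g : ℝ → ℝ), ContDiff ℝ (⊤ : ℕ∞) g →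
    (∀ k ≤ n, iteratedDeriv k g 0 = 0) → g =o[nhds 0] fun t => t ^ n := by
  intro n
  induction n with
  | zero =>
    intro g hg h0
    have hg0 : g 0 = 0 := by simpa [iteratedDeriv_zero] using h0 0 le_rfl
    have ht : Filter.Tendsto g (nhds 0) (nhds 0) := by
      have := hg.continuous.continuousAt (x := (0 : ℝ))
      rwa [ContinuousAt, hg0] at this
    have : g =o[nhds 0] (fun _ : ℝ => (1 : ℝ)) := (isLittleO_one_iff ℝ).mpr ht
    simpa using this
  | succ n ih =>
    intro g hg h0
    have hg' := smooth_deriv hg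
    have hder : (deriv g) =o[nhds 0] fun t => t ^ n := by
      apply ih _ hg'
      intro k hk
      rw [← iteratedDeriv_succ']
      exact h0 (k + 1) (by omega)
    have hg0 : g 0 = 0 := by simpa [iteratedDeriv_zero] using h0 0 (by omega)
    rw [isLittleO_iff]
    intro c hc
    obtain ⟨δ, hδ, hball⟩ := Metric.eventually_nhds_iff.mp ((isLittleO_iff.mp hder) hc)
    rw [Metric.eventually_nhds_iff]
    refine ⟨δ, hδ, fun t ht => ?_⟩
    have hdist : |t| < δ := by simpa [Real.dist_eq] using ht
    have hbb : ∀ x : ℝ, |x| ≤ |t| → ‖deriv g x‖ ≤ c * |t| ^ n := by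
      intro x hx
      have h1 : ‖deriv g x‖ ≤ c * ‖x ^ n‖ := by
        apply hball
        simp [Real.dist_eq]
        exact lt_of_le_of_lt hx hdist
      calc ‖deriv g x‖ ≤ c * ‖x ^ n‖ := h1
        _ = c * |x| ^ n := by rw [norm_pow]; rfl
        _ ≤ c * |t| ^ n := by
            apply mul_le_mul_of_nonneg_left (pow_le_pow_left₀ (abs_nonneg x) hx n) hc.le
    have := mvt_bound (diffAll hg) hg0 hbb
    calc ‖g t‖ ≤ c * |t| ^ n * |t| := this
      _ = c * ‖t ^ (n + 1)‖ := by rw [norm_pow]; push_cast; ring_nf; rfl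



/-- Directional derivative operator. -/
def Dop (w : ℝ × ℝ) (f : ℝ × ℝ → ℝ) : ℝ × ℝ → ℝ := fun x => fderiv ℝ f x w

lemma Dop_smooth {f : ℝ × ℝ → ℝ} (hf : ContDiff ℝ (⊤ : ℕ∞) f) (w : ℝ × ℝ) :
    ContDiff ℝ (⊤ : ℕ∞) (Dop w f) :=
  (hf.fderiv_right (by norm_cast)).clm_apply contDiff_const

lemma diffAll2 {f : ℝ × ℝ → ℝ} (hf : ContDiff ℝ (⊤ : ℕ∞) f) : Differentiable ℝ f :=
  hf.differentiable (by simp)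

lemma Dop_swap {f : ℝ × ℝ → ℝ} (hf : ContDiff ℝ (⊤ : ℕ∞) f) (v w : ℝ × ℝ) (x : ℝ × ℝ) :
    Dop v (Dop w f) x = Dop w (Dop v f) x := by
  have hd : DifferentiableAt ℝ (fderiv ℝ f) x :=
    ((hf.fderiv_right (m := (⊤ : ℕ∞)) (by norm_cast)).differentiable
      (by simp)) x
  have key : ∀ u z : ℝ × ℝ, Dop u (Dop z f) x = fderiv ℝ (fderiv ℝ f) x u z := by
    intro u z
    show fderiv ℝ (fun y => fderiv ℝ f y z) x u = _
    rw [fderiv_clm_apply hd (differentiableAt_const z)]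
    simp
  rw [key v w, key w v]
  exact (hf.contDiffAt.isSymmSndFDerivAt (by simp [minSmoothness_of_isRCLikeNormedField]; exact WithTop.coe_le_coe.mpr le_top)).eq v w

lemma Dop_apply_linear (f : ℝ × ℝ → ℝ) (x : ℝ × ℝ) (s : ℝ) :
    Dop (1, s) f x = Dop (1, 0) f x + s * Dop (0, 1) f x := by
  show fderiv ℝ f x (1, s) = fderiv ℝ f x (1, 0) + s * fderiv ℝ f x (0, 1)
  have : ((1 : ℝ), s) = (1, 0) + s • ((0 : ℝ), (1 : ℝ)) := by
    simp [Prod.ext_iff]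
  rw [this, map_add, map_smul]
  simp

lemma Dop_add_smul {g₁ g₂ : ℝ × ℝ → ℝ} (hg₁ : ContDiff ℝ (⊤ : ℕ∞) g₁)
    (hg₂ : ContDiff ℝ (⊤ : ℕ∞) g₂) (c : ℝ) (w x : ℝ × ℝ) :
    Dop w (fun y => g₁ y + c * g₂ y) x = Dop w g₁ x + c * Dop w g₂ x := by
  show fderiv ℝ (fun y => g₁ y + c * g₂ y) x w = _
  rw [fderiv_fun_add (diffAll2 hg₁ x) ((diffAll2 hg₂ x).const_mul c),
    fderiv_const_mul (diffAll2 hg₂ x)]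
  simp [Dop]


-- slice lemmas
lemma slice1 {G : ℝ × ℝ → ℝ} (hG : ContDiff ℝ (⊤ : ℕ∞) G) (u y : ℝ) :
    deriv (fun x => G (x, y)) u = Dop (1, 0) G (u, y) := by
  have h1 : HasDerivAt (fun x : ℝ => (x, y)) ((1 : ℝ), (0 : ℝ)) u :=
    (hasDerivAt_id u).prodMk (hasDerivAt_const u y)
  have := ((diffAll2 hG (u, y)).hasFDerivAt.comp_hasDerivAt u h1).deriv
  simpa [Function.comp_def, Dop] using this

lemma slice2 {G : ℝ × ℝ → ℝ} (hG : ContDiff ℝ (⊤ : ℕ∞) G) (u y : ℝ) :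
    deriv (fun y' => G (u, y')) y = Dop (0, 1) G (u, y) := by
  have h1 : HasDerivAt (fun y' : ℝ => (u, y')) ((0 : ℝ), (1 : ℝ)) y :=
    (hasDerivAt_const y u).prodMk (hasDerivAt_id y)
  have := ((diffAll2 hG (u, y)).hasFDerivAt.comp_hasDerivAt y h1).deriv
  simpa [Function.comp_def, Dop] using this

lemma line_deriv {G : ℝ × ℝ → ℝ} (hG : ContDiff ℝ (⊤ : ℕ∞) G) (s t : ℝ) :
    deriv (fun t' => G (t', s * t')) t = Dop (1, s) G (t, s * t) := by
  have h1 : HasDerivAt (fun t' : ℝ => (t', s * t')) ((1 : ℝ), s) t := by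
    apply (hasDerivAt_id t).prodMk
    simpa using (hasDerivAt_id t).const_mul s
  have := ((diffAll2 hG (t, s * t)).hasFDerivAt.comp_hasDerivAt t h1).deriv
  simpa [Function.comp_def, Dop] using this

lemma line_iter {G : ℝ × ℝ → ℝ} (hG : ContDiff ℝ (⊤ : ℕ∞) G) (s : ℝ) : ∀ k : ℕ,
    iteratedDeriv k (fun t => G (t, s * t)) 0 = ((Dop (1, s))^[k] G) (0, s * 0) := by
  intro k
  induction k generalizing G with
  | zero => simp
  | succ k ih =>
    rw [iteratedDeriv_succ']
    have hd : deriv (fun t => G (t, s * t)) = fun t => (Dop (1, s) G) (t, s * t) :=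
      funext fun t => line_deriv hG s t
    rw [hd, ih (Dop_smooth hG (1, s)), ← Function.iterate_succ_apply]

-- function-level swaps
lemma swapfun {f : ℝ × ℝ → ℝ} (hf : ContDiff ℝ (⊤ : ℕ∞) f) :
    Dop (0, 1) (Dop (1, 0) f) = Dop (1, 0) (Dop (0, 1) f) :=
  funext (Dop_swap hf (0, 1) (1, 0))

lemma swapfun2 {f : ℝ × ℝ → ℝ} (hf : ContDiff ℝ (⊤ : ℕ∞) f) :
    Dop (0, 1) (Dop (1, 0) (Dop (1, 0) f)) = Dop (1, 0) (Dop (1, 0) (Dop (0, 1) f)) := by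
  rw [swapfun (Dop_smooth hf (1, 0)), swapfun hf]

lemma swapfun3 {f : ℝ × ℝ → ℝ} (hf : ContDiff ℝ (⊤ : ℕ∞) f) :
    Dop (0, 1) (Dop (1, 0) (Dop (1, 0) (Dop (1, 0) f))) =
      Dop (1, 0) (Dop (1, 0) (Dop (1, 0) (Dop (0, 1) f))) := by
  rw [swapfun (Dop_smooth (Dop_smooth hf (1, 0)) (1, 0)), swapfun2 hf]

-- expansions
lemma expand1 (f : ℝ × ℝ → ℝ) (s : ℝ) (x : ℝ × ℝ) :
    (Dop (1, s))^[1] f x = Dop (1, 0) f x + s * Dop (0, 1) f x := by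
  simpa using Dop_apply_linear f x s

lemma expand2 {f : ℝ × ℝ → ℝ} (hf : ContDiff ℝ (⊤ : ℕ∞) f) (s : ℝ) (x : ℝ × ℝ) :
    (Dop (1, s))^[2] f x = Dop (1, 0) (Dop (1, 0) f) x +
      (2 * s) * Dop (1, 0) (Dop (0, 1) f) x + s ^ 2 * Dop (0, 1) (Dop (0, 1) f) x := by
  have h1 : Dop (1, s) f = fun y => Dop (1, 0) f y + s * Dop (0, 1) f y :=
    funext fun y => Dop_apply_linear f y s
  show Dop (1, s) (Dop (1, s) f) x = _
  rw [h1, Dop_add_smul (Dop_smooth hf (1, 0)) (Dop_smooth hf (0, 1)) s (1, s) x,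
    Dop_apply_linear (Dop (1, 0) f) x s, Dop_apply_linear (Dop (0, 1) f) x s,
    Dop_swap hf (0, 1) (1, 0) x]
  ring

lemma expand3 {f : ℝ × ℝ → ℝ} (hf : ContDiff ℝ (⊤ : ℕ∞) f) (s : ℝ) (x : ℝ × ℝ) :
    (Dop (1, s))^[3] f x =
      Dop (1, 0) (Dop (1, 0) (Dop (1, 0) f)) x
      + (3 * s) * Dop (1, 0) (Dop (1, 0) (Dop (0, 1) f)) x
      + (3 * s ^ 2) * Dop (1, 0) (Dop (0, 1) (Dop (0, 1) f)) x
      + s ^ 3 * Dop (0, 1) (Dop (0, 1) (Dop (0, 1) f)) x := by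
  have h2 : (Dop (1, s))^[2] f = fun y => Dop (1, 0) (Dop (1, 0) f) y
      + (2 * s) * Dop (1, 0) (Dop (0, 1) f) y + s ^ 2 * Dop (0, 1) (Dop (0, 1) f) y :=
    funext fun y => expand2 hf s y
  rw [Function.iterate_succ_apply' (Dop (1, s)) 2 f, h2,
    Dop_add_smul ((Dop_smooth (Dop_smooth hf (1, 0)) (1, 0)).add
      (contDiff_const.mul (Dop_smooth (Dop_smooth hf (0, 1)) (1, 0))))
      (Dop_smooth (Dop_smooth hf (0, 1)) (0, 1)) (s ^ 2) (1, s) x,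
    Dop_add_smul (Dop_smooth (Dop_smooth hf (1, 0)) (1, 0))
      (Dop_smooth (Dop_smooth hf (0, 1)) (1, 0)) (2 * s) (1, s) x,
    Dop_apply_linear (Dop (1, 0) (Dop (1, 0) f)) x s,
    Dop_apply_linear (Dop (1, 0) (Dop (0, 1) f)) x s,
    Dop_apply_linear (Dop (0, 1) (Dop (0, 1) f)) x s,
    Dop_swap (Dop_smooth hf (1, 0)) (0, 1) (1, 0) x,
    swapfun hf,
    Dop_swap (Dop_smooth hf (0, 1)) (0, 1) (1, 0) x]
  ring

lemma expand4 {f : ℝ × ℝ → ℝ} (hf : ContDiff ℝ (⊤ : ℕ∞) f) (s : ℝ) (x : ℝ × ℝ) :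
    (Dop (1, s))^[4] f x =
      Dop (1, 0) (Dop (1, 0) (Dop (1, 0) (Dop (1, 0) f))) x
      + (4 * s) * Dop (1, 0) (Dop (1, 0) (Dop (1, 0) (Dop (0, 1) f))) x
      + (6 * s ^ 2) * Dop (1, 0) (Dop (1, 0) (Dop (0, 1) (Dop (0, 1) f))) x
      + (4 * s ^ 3) * Dop (1, 0) (Dop (0, 1) (Dop (0, 1) (Dop (0, 1) f))) x
      + s ^ 4 * Dop (0, 1) (Dop (0, 1) (Dop (0, 1) (Dop (0, 1) f))) x := by
  have h3 : (Dop (1, s))^[3] f = fun y => Dop (1, 0) (Dop (1, 0) (Dop (1, 0) f)) y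
      + (3 * s) * Dop (1, 0) (Dop (1, 0) (Dop (0, 1) f)) y
      + (3 * s ^ 2) * Dop (1, 0) (Dop (0, 1) (Dop (0, 1) f)) y
      + s ^ 3 * Dop (0, 1) (Dop (0, 1) (Dop (0, 1) f)) y :=
    funext fun y => expand3 hf s y
  have s111 := Dop_smooth (Dop_smooth (Dop_smooth hf (1, 0)) (1, 0)) (1, 0)
  have s112 := Dop_smooth (Dop_smooth (Dop_smooth hf (0, 1)) (1, 0)) (1, 0)
  have s122 := Dop_smooth (Dop_smooth (Dop_smooth hf (0, 1)) (0, 1)) (1, 0)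
  have s222 := Dop_smooth (Dop_smooth (Dop_smooth hf (0, 1)) (0, 1)) (0, 1)
  rw [Function.iterate_succ_apply' (Dop (1, s)) 3 f, h3,
    Dop_add_smul ((s111.add (contDiff_const.mul s112)).add
      (contDiff_const.mul s122)) s222 (s ^ 3) (1, s) x,
    Dop_add_smul (s111.add (contDiff_const.mul s112)) s122 (3 * s ^ 2) (1, s) x,
    Dop_add_smul s111 s112 (3 * s) (1, s) x,
    Dop_apply_linear (Dop (1, 0) (Dop (1, 0) (Dop (1, 0) f))) x s,
    Dop_apply_linear (Dop (1, 0) (Dop (1, 0) (Dop (0, 1) f))) x s,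
    Dop_apply_linear (Dop (1, 0) (Dop (0, 1) (Dop (0, 1) f))) x s,
    Dop_apply_linear (Dop (0, 1) (Dop (0, 1) (Dop (0, 1) f))) x s,
    Dop_swap (Dop_smooth (Dop_smooth hf (1, 0)) (1, 0)) (0, 1) (1, 0) x,
    swapfun2 hf,
    Dop_swap (Dop_smooth (Dop_smooth hf (0, 1)) (1, 0)) (0, 1) (1, 0) x,
    swapfun (Dop_smooth hf (0, 1)),
    Dop_swap (Dop_smooth (Dop_smooth hf (0, 1)) (0, 1)) (0, 1) (1, 0) x]
  ring

lemma const_mul_pow_isLittleO {K : ℝ} {m : ℕ}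
    (h : (fun t : ℝ => K * t ^ m) =o[nhds 0] fun t => t ^ m) : K = 0 := by
  by_contra hK
  have hpos : 0 < |K| / 2 := by positivity
  obtain ⟨δ, hδ, hball⟩ := Metric.eventually_nhds_iff.mp (isLittleO_iff.mp h hpos)
  have ht : dist (δ / 2) (0 : ℝ) < δ := by
    rw [Real.dist_eq, sub_zero, abs_of_pos (by linarith)]; linarith
  have := hball ht
  rw [norm_mul, norm_pow] at this
  have hpow : (0 : ℝ) < ‖(δ / 2 : ℝ)‖ ^ m := by
    apply pow_pos
    rw [Real.norm_eq_abs, abs_of_pos (by linarith)]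
    linarith
  have : ‖K‖ ≤ |K| / 2 := le_of_mul_le_mul_right (by linarith [this]) hpow
  rw [Real.norm_eq_abs] at this
  linarith [abs_pos.mpr hK]

lemma vanish : ∀ (n : ℕ) (g : ℝ → ℝ), ContDiff ℝ (⊤ : ℕ∞) g →
    g =o[nhds 0] (fun t => t ^ n) → ∀ k ≤ n, iteratedDeriv k g 0 = 0 := by
  intro n
  induction n with
  | zero =>
    intro g hg ho k hk
    interval_cases k
    have h1 : Filter.Tendsto g (nhds 0) (nhds (g 0)) := hg.continuous.continuousAt
    have h2 : Filter.Tendsto g (nhds 0) (nhds 0) := by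
      apply (isLittleO_one_iff ℝ).mp
      simpa using ho
    rw [iteratedDeriv_zero]
    exact tendsto_nhds_unique h1 h2
  | succ n ih =>
    intro g hg ho
    have hbig : (fun t : ℝ => t ^ (n + 1)) =O[nhds 0] fun t => t ^ n := by
      rw [isBigO_iff]
      refine ⟨1, Metric.eventually_nhds_iff.mpr ⟨1, one_pos, fun t ht => ?_⟩⟩
      have : |t| ≤ 1 := by
        rw [Real.dist_eq, sub_zero] at ht; linarith [ht]
      rw [norm_pow, norm_pow, one_mul]
      exact pow_le_pow_of_le_one (norm_nonneg t) this (Nat.le_succ n)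
    have hlow := ih g hg (ho.trans_isBigO hbig)
    intro k hk
    rcases Nat.lt_or_ge k (n + 1) with hlt | hge
    · exact hlow k (by omega)
    · have hk' : k = n + 1 := by omega
      subst hk'
      set cc : ℝ := iteratedDeriv (n + 1) g 0 / (n + 1).factorial with hcc
      have hpsm : ContDiff ℝ (⊤ : ℕ∞) (fun t : ℝ => cc * t ^ (n + 1)) :=
        contDiff_const.mul (contDiff_id.pow (n + 1))
      have hψsm : ContDiff ℝ (⊤ : ℕ∞) (fun t => g t - cc * t ^ (n + 1)) := hg.sub hpsm
      have hψjet : ∀ j ≤ n + 1, iteratedDeriv j (fun t => g t - cc * t ^ (n + 1)) 0 = 0 := by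
        intro j hj
        rw [iterDeriv_sub hg hpsm]
        show iteratedDeriv j g 0 - iteratedDeriv j (fun t => cc * t ^ (n + 1)) 0 = 0
        rcases Nat.lt_or_ge j (n + 1) with hj2 | hj2
        · rw [hlow j (by omega), iterDeriv_const_mul_pow_zero cc j (n + 1) hj2, sub_zero]
        · have : j = n + 1 := by omega
          subst this
          rw [iterDeriv_const_mul_pow_self]
          rw [hcc]
          field_simp
          ring
      have hψo := peano (n + 1) _ hψsm hψjet
      have hmono : (fun t : ℝ => cc * t ^ (n + 1)) =o[nhds 0] fun t => t ^ (n + 1) := by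
        have hfe : (fun t : ℝ => cc * t ^ (n + 1)) =
            fun t => g t - (g t - cc * t ^ (n + 1)) := by funext t; ring
        rw [hfe]
        exact ho.sub hψo
      have hcc0 := const_mul_pow_isLittleO hmono
      have hfac : ((n + 1).factorial : ℝ) ≠ 0 := by positivity
      rw [hcc] at hcc0
      field_simp at hcc0
      simpa using hcc0


def J2 (f : ℝ → ℝ) (v d e : ℝ) : Prop :=
  ContDiff ℝ (⊤ : ℕ∞) f ∧ f 0 = v ∧ deriv f 0 = d ∧ deriv (deriv f) 0 = e

lemma J2.const (c : ℝ) : J2 (fun _ => c) c 0 0 :=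
  ⟨contDiff_const, rfl, by simp, by simp⟩

lemma J2.add {f g : ℝ → ℝ} {vf df ef vg dg eg : ℝ} (hf : J2 f vf df ef) (hg : J2 g vg dg eg) :
    J2 (fun u => f u + g u) (vf + vg) (df + dg) (ef + eg) := by
  obtain ⟨hfs, hf0, hf1, hf2⟩ := hf
  obtain ⟨hgs, hg0, hg1, hg2⟩ := hg
  refine ⟨hfs.add hgs, by rw [← hf0, ← hg0], ?_, ?_⟩
  · rw [deriv_fun_add (diffAll hfs 0) (diffAll hgs 0), hf1, hg1]
  · have hde : deriv (fun u => f u + g u) = fun u => deriv f u + deriv g u :=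
      funext fun u => deriv_fun_add (diffAll hfs u) (diffAll hgs u)
    rw [hde, deriv_fun_add (diffAll (smooth_deriv hfs) 0) (diffAll (smooth_deriv hgs) 0), hf2, hg2]

lemma J2.mul {f g : ℝ → ℝ} {vf df ef vg dg eg : ℝ} (hf : J2 f vf df ef) (hg : J2 g vg dg eg) :
    J2 (fun u => f u * g u) (vf * vg) (df * vg + vf * dg)
      (ef * vg + 2 * (df * dg) + vf * eg) := by
  obtain ⟨hfs, hf0, hf1, hf2⟩ := hf
  obtain ⟨hgs, hg0, hg1, hg2⟩ := hg
  refine ⟨hfs.mul hgs, by rw [← hf0, ← hg0], ?_, ?_⟩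
  · rw [deriv_fun_mul (diffAll hfs 0) (diffAll hgs 0), hf1, hg1, hf0, hg0]
  · have hde : deriv (fun u => f u * g u) = fun u => deriv f u * g u + f u * deriv g u :=
      funext fun u => deriv_fun_mul (diffAll hfs u) (diffAll hgs u)
    rw [hde, deriv_fun_add (f := fun u => deriv f u * g u) (g := fun u => f u * deriv g u) ((diffAll (smooth_deriv hfs) 0).mul (diffAll hgs 0))
        ((diffAll hfs 0).mul (diffAll (smooth_deriv hgs) 0)),
      deriv_fun_mul (diffAll (smooth_deriv hfs) 0) (diffAll hgs 0),
      deriv_fun_mul (diffAll hfs 0) (diffAll (smooth_deriv hgs) 0),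
      hf2, hg2, hf1, hg1, hf0, hg0]
    ring

lemma J2.sub {f g : ℝ → ℝ} {vf df ef vg dg eg : ℝ} (hf : J2 f vf df ef) (hg : J2 g vg dg eg) :
    J2 (fun u => f u - g u) (vf - vg) (df - dg) (ef - eg) := by
  obtain ⟨hfs, hf0, hf1, hf2⟩ := hf
  obtain ⟨hgs, hg0, hg1, hg2⟩ := hg
  refine ⟨hfs.sub hgs, by rw [← hf0, ← hg0], ?_, ?_⟩
  · rw [deriv_fun_sub (diffAll hfs 0) (diffAll hgs 0), hf1, hg1]
  · have hde : deriv (fun u => f u - g u) = fun u => deriv f u - deriv g u :=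
      funext fun u => deriv_fun_sub (diffAll hfs u) (diffAll hgs u)
    rw [hde, deriv_fun_sub (diffAll (smooth_deriv hfs) 0) (diffAll (smooth_deriv hgs) 0), hf2, hg2]

lemma J2.const_mul {f : ℝ → ℝ} {vf df ef : ℝ} (hf : J2 f vf df ef) (c : ℝ) :
    J2 (fun u => c * f u) (c * vf) (c * df) (c * ef) := by
  have := (J2.const c).mul hf
  refine ⟨this.1, ?_, ?_, ?_⟩
  · rw [this.2.1]
  · rw [this.2.2.1]; ring
  · rw [this.2.2.2]; ring

lemma J2.pow2 {f : ℝ → ℝ} {vf df ef : ℝ} (hf : J2 f vf df ef) :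
    J2 (fun u => f u ^ 2) (vf ^ 2) (2 * vf * df) (ef * vf + 2 * df ^ 2 + vf * ef) := by
  have h := hf.mul hf
  have hfe : (fun u => f u ^ 2) = fun u => f u * f u := funext fun u => sq (f u)
  rw [hfe]
  refine ⟨h.1, h.2.1.trans (by ring), h.2.2.1.trans (by ring), h.2.2.2.trans (by ring)⟩

lemma J2_zero_vals {f : ℝ → ℝ} {v d e : ℝ} (hf : J2 f v d e) (h0 : ∀ u, f u = 0) :
    v = 0 ∧ d = 0 ∧ e = 0 := by
  have hfun : f = fun _ => 0 := funext h0
  obtain ⟨-, h1, h2, h3⟩ := hf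
  rw [hfun] at h1 h2 h3
  simp only [deriv_const'] at h2 h3
  exact ⟨h1.symm, h2.symm, h3.symm⟩



lemma iterDeriv_cpow_zero_fun (c : ℝ) (m : ℕ) : ∀ j : ℕ,
    iteratedDeriv (m + 1 + j) (fun t : ℝ => c * t ^ m) = fun _ => 0 := by
  intro j
  induction j with
  | zero =>
    rw [Nat.add_zero, iteratedDeriv_succ, iterDeriv_const_mul_pow m c m le_rfl]
    funext t
    simp
  | succ j ih =>
    rw [show m + 1 + (j + 1) = (m + 1 + j) + 1 by omega, iteratedDeriv_succ, ih]
    simp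

lemma iterDeriv_cpow_above (c : ℝ) {k m : ℕ} (h : m < k) :
    iteratedDeriv k (fun t : ℝ => c * t ^ m) 0 = 0 := by
  obtain ⟨j, rfl⟩ : ∃ j, k = m + 1 + j := ⟨k - m - 1, by omega⟩
  rw [iterDeriv_cpow_zero_fun c m j]

lemma iterDeriv_add {f g : ℝ → ℝ} (hf : ContDiff ℝ (⊤ : ℕ∞) f) (hg : ContDiff ℝ (⊤ : ℕ∞) g) (k : ℕ) :
    iteratedDeriv k (fun t => f t + g t) = fun t => iteratedDeriv k f t + iteratedDeriv k g t := by
  induction k generalizing f g with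
  | zero => simp [iteratedDeriv_zero]
  | succ k ih =>
    rw [iteratedDeriv_succ', iteratedDeriv_succ' (f := f), iteratedDeriv_succ' (f := g)]
    have : deriv (fun t => f t + g t) = fun t => deriv f t + deriv g t := by
      funext t
      exact deriv_fun_add (hf.differentiable (by simp) t)
        (hg.differentiable (by simp) t)
    rw [this, ih (contDiff_infty_iff_deriv.mp hf).2 (contDiff_infty_iff_deriv.mp hg).2]

lemma smooth_cpow (c : ℝ) (m : ℕ) : ContDiff ℝ (⊤ : ℕ∞) (fun t : ℝ => c * t ^ m) :=
  contDiff_const.mul (contDiff_id.pow m)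

/-- iterated derivatives at 0 of c2 t² + c3 t³ + c4 t⁴ -/
lemma iterDeriv_poly234 (c2 c3 c4 : ℝ) (k : ℕ) (hk : 1 ≤ k) (hk4 : k ≤ 4) :
    iteratedDeriv k (fun t : ℝ => c2 * t ^ 2 + c3 * t ^ 3 + c4 * t ^ 4) 0 =
      if k = 2 then 2 * c2 else if k = 3 then 6 * c3 else if k = 4 then 24 * c4 else 0 := by
  have h1 : (fun t : ℝ => c2 * t ^ 2 + c3 * t ^ 3 + c4 * t ^ 4) =
      fun t => (fun t : ℝ => c2 * t ^ 2 + c3 * t ^ 3) t + (fun t : ℝ => c4 * t ^ 4) t := rfl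
  rw [h1, iterDeriv_add ((smooth_cpow c2 2).add (smooth_cpow c3 3)) (smooth_cpow c4 4)]
  have h2 : (fun t : ℝ => c2 * t ^ 2 + c3 * t ^ 3) =
      fun t => (fun t : ℝ => c2 * t ^ 2) t + (fun t : ℝ => c3 * t ^ 3) t := rfl
  rw [h2, iterDeriv_add (smooth_cpow c2 2) (smooth_cpow c3 3)]
  interval_cases k
  · simp only [iterDeriv_const_mul_pow_zero c2 1 2 (by omega),
      iterDeriv_const_mul_pow_zero c3 1 3 (by omega),
      iterDeriv_const_mul_pow_zero c4 1 4 (by omega)]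
    norm_num
  · simp only [iterDeriv_const_mul_pow_self c2 2,
      iterDeriv_const_mul_pow_zero c3 2 3 (by omega),
      iterDeriv_const_mul_pow_zero c4 2 4 (by omega)]
    norm_num [Nat.factorial]
    ring
  · simp only [iterDeriv_const_mul_pow_self c3 3,
      iterDeriv_const_mul_pow_zero c4 3 4 (by omega),
      iterDeriv_cpow_above c2 (by omega : 2 < 3)]
    norm_num [Nat.factorial]
    ring
  · simp only [iterDeriv_const_mul_pow_self c4 4,
      iterDeriv_cpow_above c2 (by omega : 2 < 4),
      iterDeriv_cpow_above c3 (by omega : 3 < 4)]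
    norm_num [Nat.factorial]
    ring


lemma J2.vals {f : ℝ → ℝ} {v d e v' d' e' : ℝ} (hf : J2 f v d e)
    (hv : v = v') (hd : d = d') (he : e = e') : J2 f v' d' e' := hv ▸ hd ▸ he ▸ hf

lemma J2_slice {G : ℝ × ℝ → ℝ} (hG : ContDiff ℝ (⊤ : ℕ∞) G) :
    J2 (fun u => G (u, 0)) (G (0, 0)) (Dop (1, 0) G (0, 0))
      (Dop (1, 0) (Dop (1, 0) G) (0, 0)) := by
  refine ⟨hG.comp (contDiff_id.prodMk contDiff_const), rfl, slice1 hG 0 0, ?_⟩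
  have h1 : deriv (fun u => G (u, 0)) = fun u => Dop (1, 0) G (u, 0) :=
    funext fun u => slice1 hG u 0
  rw [h1]
  exact slice1 (Dop_smooth hG (1, 0)) 0 0

lemma quad_hasDeriv (c0 c1 c2 t : ℝ) :
    HasDerivAt (fun t : ℝ => c0 + c1 * t + c2 * t ^ 2) (c1 + 2 * c2 * t) t := by
  have h := ((hasDerivAt_const t c0).add ((hasDerivAt_id t).const_mul c1)).add
    ((hasDerivAt_pow 2 t).const_mul c2)
  refine h.congr_deriv ?_
  push_cast
  ring

lemma quad_jets (c0 c1 c2 : ℝ) : J2 (fun t : ℝ => c0 + c1 * t + c2 * t ^ 2) c0 c1 (2 * c2) := by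
  refine ⟨(contDiff_const.add (contDiff_const.mul contDiff_id)).add
    (contDiff_const.mul (contDiff_id.pow 2)), by norm_num, ?_, ?_⟩
  · have := (quad_hasDeriv c0 c1 c2 0).deriv
    rw [this]; ring
  · have h1 : deriv (fun t : ℝ => c0 + c1 * t + c2 * t ^ 2) = fun t => c1 + 2 * c2 * t :=
      funext fun t => (quad_hasDeriv c0 c1 c2 t).deriv
    rw [h1]
    have h2 : HasDerivAt (fun t : ℝ => c1 + 2 * c2 * t) (2 * c2) 0 := by
      have := (hasDerivAt_const (0 : ℝ) c1).add ((hasDerivAt_id (0 : ℝ)).const_mul (2 * c2))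
      simpa [Pi.add_def] using this
    exact h2.deriv

/-- Proposition 20: for the graph z = h(u,v) in Monge form
h = (k₁/2)u² + (k₂/2)v² + (a/6)u³ + (d/2)u²v + (b/2)uv² + (c/6)v³
    + (A/24)u⁴ + (B/6)u³v + (C/4)u²v² + (D/6)uv³ + (E₄/24)v⁴ + h.o.t., with k₁ ≠ k₂,
any smooth branch κ of principal curvature along the u-axis (κ(u) an eigenvalue of
the shape operator at (u,0), κ(0) = k₁) has the expansion
κ(u) = k₁ + a·u + (1/2)(A - 3k₁³ + 2d²/(k₁-k₂))u² + o(u²); in particular κ'(0) = a,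
so the origin is a ridge point (κ'(0) = 0) iff a = 0, and then the ridge invariant is
σ₁ = κ''(0)/(k₁-k₂) = (A - 3k₁³)/(k₁-k₂) + 2d²/(k₁-k₂)². -/
theorem stmt19 (k₁ k₂ a d b c A B C D E₄ : ℝ) (hk : k₁ ≠ k₂)
    (h : ℝ → ℝ → ℝ) (hsm : ContDiff ℝ (⊤ : ℕ∞) (fun p : ℝ × ℝ => h p.1 p.2))
    (hjet : (fun p : ℝ × ℝ => h p.1 p.2 -
        (k₁/2 * p.1 ^ 2 + k₂/2 * p.2 ^ 2 + a/6 * p.1 ^ 3 + d/2 * p.1 ^ 2 * p.2 +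
          b/2 * p.1 * p.2 ^ 2 + c/6 * p.2 ^ 3 + A/24 * p.1 ^ 4 + B/6 * p.1 ^ 3 * p.2 +
          C/4 * p.1 ^ 2 * p.2 ^ 2 + D/6 * p.1 * p.2 ^ 3 + E₄/24 * p.2 ^ 4)) =o[nhds 0]
        fun p : ℝ × ℝ => ‖p‖ ^ 4)
    (κ : ℝ → ℝ) (hκ : ContDiff ℝ (⊤ : ℕ∞) κ) (hκ0 : κ 0 = k₁)
    (heig : ∀ u : ℝ,
      ((1 + pu h u ^ 2) * (1 + pv h u ^ 2) - (pu h u * pv h u) ^ 2) * κ u ^ 2 -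
        ((puu h u / Wg h u) * (1 + pv h u ^ 2) -
          2 * (puv h u / Wg h u) * (pu h u * pv h u) +
          (pvv h u / Wg h u) * (1 + pu h u ^ 2)) * κ u +
        ((puu h u / Wg h u) * (pvv h u / Wg h u) - (puv h u / Wg h u) ^ 2) = 0) :
    ((fun u : ℝ => κ u -
        (k₁ + a * u + (1/2) * (A - 3 * k₁ ^ 3 + 2 * d ^ 2 / (k₁ - k₂)) * u ^ 2)) =o[nhds 0]
      fun u : ℝ => u ^ 2) ∧
    deriv κ 0 = a ∧
    (deriv κ 0 = 0 ↔ a = 0) ∧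
    (a = 0 → iteratedDeriv 2 κ 0 / (k₁ - k₂) =
      (A - 3 * k₁ ^ 3) / (k₁ - k₂) + 2 * d ^ 2 / (k₁ - k₂) ^ 2) := by
  set HH : ℝ × ℝ → ℝ := fun p => h p.1 p.2 with hHHdef
  have hsm' : ContDiff ℝ (⊤ : ℕ∞) HH := hsm.of_le (by simp)
  have hκ' : ContDiff ℝ (⊤ : ℕ∞) κ := hκ.of_le (by simp)
  -- the key jet identities along lines
  have key : ∀ s : ℝ, ∀ k : ℕ, k ≤ 4 →
      iteratedDeriv k (fun t => HH (t, s * t)) 0 =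
      iteratedDeriv k (fun t : ℝ => (k₁/2 + k₂/2 * s^2) * t^2
        + (a/6 + d/2 * s + b/2 * s^2 + c/6 * s^3) * t^3
        + (A/24 + B/6 * s + C/4 * s^2 + D/6 * s^3 + E₄/24 * s^4) * t^4) 0 := by
    intro s k hk
    set pol : ℝ → ℝ := fun t : ℝ => (k₁/2 + k₂/2 * s^2) * t^2
        + (a/6 + d/2 * s + b/2 * s^2 + c/6 * s^3) * t^3
        + (A/24 + B/6 * s + C/4 * s^2 + D/6 * s^3 + E₄/24 * s^4) * t^4 with hpoldef
    have hline : ContDiff ℝ (⊤ : ℕ∞) (fun t : ℝ => ((t, s * t) : ℝ × ℝ)) :=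
      contDiff_id.prodMk (contDiff_const.mul contDiff_id)
    have hcomp : ContDiff ℝ (⊤ : ℕ∞) (fun t => HH (t, s * t)) := hsm'.comp hline
    have hpolsm : ContDiff ℝ (⊤ : ℕ∞) pol := by
      rw [hpoldef]
      exact ((smooth_cpow _ 2).add (smooth_cpow _ 3)).add (smooth_cpow _ 4)
    have hts : Filter.Tendsto (fun t : ℝ => ((t, s * t) : ℝ × ℝ)) (nhds 0) (nhds 0) :=
      hline.continuous.tendsto' 0 0 (by simp)
    have hbig : (fun t : ℝ => ‖((t, s * t) : ℝ × ℝ)‖ ^ 4) =O[nhds 0] fun t : ℝ => t ^ 4 := by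
      rw [Asymptotics.isBigO_iff]
      refine ⟨(1 + |s|) ^ 4, Filter.Eventually.of_forall fun t => ?_⟩
      have h1 : ‖((t, s * t) : ℝ × ℝ)‖ ≤ (1 + |s|) * |t| := by
        rw [Prod.norm_def]
        apply max_le
        · rw [Real.norm_eq_abs]; nlinarith [abs_nonneg t, abs_nonneg s]
        · rw [Real.norm_eq_abs, abs_mul]; nlinarith [abs_nonneg t, abs_nonneg s]
      have h2 : ‖((t, s * t) : ℝ × ℝ)‖ ^ 4 ≤ ((1 + |s|) * |t|) ^ 4 :=
        pow_le_pow_left₀ (norm_nonneg _) h1 4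
      calc ‖‖((t, s * t) : ℝ × ℝ)‖ ^ 4‖ = ‖((t, s * t) : ℝ × ℝ)‖ ^ 4 := by
            rw [Real.norm_eq_abs, abs_of_nonneg (by positivity)]
        _ ≤ ((1 + |s|) * |t|) ^ 4 := h2
        _ = (1 + |s|) ^ 4 * ‖t ^ 4‖ := by rw [norm_pow, Real.norm_eq_abs]; ring
    have hlo := (hjet.comp_tendsto hts).trans_isBigO hbig
    have hdiffo : (fun t : ℝ => HH (t, s * t) - pol t) =o[nhds 0] fun t : ℝ => t ^ 4 := by
      have heqf : ((fun p : ℝ × ℝ => h p.1 p.2 -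
          (k₁/2 * p.1 ^ 2 + k₂/2 * p.2 ^ 2 + a/6 * p.1 ^ 3 + d/2 * p.1 ^ 2 * p.2 +
            b/2 * p.1 * p.2 ^ 2 + c/6 * p.2 ^ 3 + A/24 * p.1 ^ 4 + B/6 * p.1 ^ 3 * p.2 +
            C/4 * p.1 ^ 2 * p.2 ^ 2 + D/6 * p.1 * p.2 ^ 3 + E₄/24 * p.2 ^ 4)) ∘
          (fun t : ℝ => ((t, s * t) : ℝ × ℝ))) =
          fun t : ℝ => HH (t, s * t) - pol t := by
        funext t
        show h t (s * t) - _ = HH (t, s * t) - pol t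
        rw [hHHdef, hpoldef]
        show h t (s * t) - _ = h t (s * t) - _
        ring
      rw [← heqf]
      exact hlo
    have hvan := vanish 4 _ (hcomp.sub hpolsm) hdiffo k hk
    have hsplit : iteratedDeriv k (fun t => HH (t, s * t) - pol t) 0 =
        iteratedDeriv k (fun t => HH (t, s * t)) 0 - iteratedDeriv k pol 0 :=
      congrFun (iterDeriv_sub hcomp hpolsm k) 0
    rw [hsplit] at hvan
    linarith [hvan]
  -- expansion equations
  have E1 : ∀ s : ℝ, Dop (1, 0) HH (0, 0) + s * Dop (0, 1) HH (0, 0) = 0 := by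
    intro s
    have h1 := key s 1 (by omega)
    rw [line_iter hsm' s 1, expand1 HH s (0, s * 0),
      iterDeriv_poly234 _ _ _ 1 (by omega) (by omega)] at h1
    norm_num at h1
    linear_combination h1
  have E2 : ∀ s : ℝ, Dop (1, 0) (Dop (1, 0) HH) (0, 0)
      + 2 * s * Dop (1, 0) (Dop (0, 1) HH) (0, 0)
      + s ^ 2 * Dop (0, 1) (Dop (0, 1) HH) (0, 0) = k₁ + k₂ * s ^ 2 := by
    intro s
    have h1 := key s 2 (by omega)
    rw [line_iter hsm' s 2, expand2 hsm' s (0, s * 0),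
      iterDeriv_poly234 _ _ _ 2 (by omega) (by omega)] at h1
    norm_num at h1
    linear_combination h1
  have E3 : ∀ s : ℝ, Dop (1, 0) (Dop (1, 0) (Dop (1, 0) HH)) (0, 0)
      + 3 * s * Dop (1, 0) (Dop (1, 0) (Dop (0, 1) HH)) (0, 0)
      + 3 * s ^ 2 * Dop (1, 0) (Dop (0, 1) (Dop (0, 1) HH)) (0, 0)
      + s ^ 3 * Dop (0, 1) (Dop (0, 1) (Dop (0, 1) HH)) (0, 0)
      = a + 3 * d * s + 3 * b * s ^ 2 + c * s ^ 3 := by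
    intro s
    have h1 := key s 3 (by omega)
    rw [line_iter hsm' s 3, expand3 hsm' s (0, s * 0),
      iterDeriv_poly234 _ _ _ 3 (by omega) (by omega)] at h1
    norm_num at h1
    linear_combination h1
  have E4 : ∀ s : ℝ, Dop (1, 0) (Dop (1, 0) (Dop (1, 0) (Dop (1, 0) HH))) (0, 0)
      + 4 * s * Dop (1, 0) (Dop (1, 0) (Dop (1, 0) (Dop (0, 1) HH))) (0, 0)
      + 6 * s ^ 2 * Dop (1, 0) (Dop (1, 0) (Dop (0, 1) (Dop (0, 1) HH))) (0, 0)
      + 4 * s ^ 3 * Dop (1, 0) (Dop (0, 1) (Dop (0, 1) (Dop (0, 1) HH))) (0, 0)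
      + s ^ 4 * Dop (0, 1) (Dop (0, 1) (Dop (0, 1) (Dop (0, 1) HH))) (0, 0)
      = A + 4 * B * s + 6 * C * s ^ 2 + 4 * D * s ^ 3 + E₄ * s ^ 4 := by
    intro s
    have h1 := key s 4 (by omega)
    rw [line_iter hsm' s 4, expand4 hsm' s (0, s * 0),
      iterDeriv_poly234 _ _ _ 4 (by omega) (by omega)] at h1
    norm_num at h1
    linear_combination h1
  -- extracted mixed partial values
  have hm10 : Dop (1, 0) HH (0, 0) = 0 := by linear_combination E1 0
  have hm01 : Dop (0, 1) HH (0, 0) = 0 := by linear_combination E1 1 - E1 0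
  have hm20 : Dop (1, 0) (Dop (1, 0) HH) (0, 0) = k₁ := by linear_combination E2 0
  have hm11 : Dop (1, 0) (Dop (0, 1) HH) (0, 0) = 0 := by
    linear_combination (E2 1 - E2 (-1)) / 4
  have hm02 : Dop (0, 1) (Dop (0, 1) HH) (0, 0) = k₂ := by
    linear_combination (E2 1 + E2 (-1)) / 2 - E2 0
  have hm30 : Dop (1, 0) (Dop (1, 0) (Dop (1, 0) HH)) (0, 0) = a := by
    linear_combination E3 0
  have hm21 : Dop (1, 0) (Dop (1, 0) (Dop (0, 1) HH)) (0, 0) = d := by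
    linear_combination (-1/6) * E3 0 + (1/3) * E3 1 + (-1/9) * E3 (-1) + (-1/18) * E3 2
  have hm12 : Dop (1, 0) (Dop (0, 1) (Dop (0, 1) HH)) (0, 0) = b := by
    linear_combination (E3 1 + E3 (-1)) / 6 - E3 0 / 3
  have hm40 : Dop (1, 0) (Dop (1, 0) (Dop (1, 0) (Dop (1, 0) HH)))  (0, 0) = A := by
    linear_combination E4 0
  have hm31 : Dop (1, 0) (Dop (1, 0) (Dop (1, 0) (Dop (0, 1) HH))) (0, 0) = B := by
    linear_combination (1/6) * (E4 1 - E4 (-1)) + (-1/48) * (E4 2 - E4 (-2))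
  have hm22 : Dop (1, 0) (Dop (1, 0) (Dop (0, 1) (Dop (0, 1) HH))) (0, 0) = C := by
    linear_combination (2/9) * ((E4 1 + E4 (-1)) / 2 - E4 0)
      - (1/72) * ((E4 2 + E4 (-2)) / 2 - E4 0)
  -- identification of the component functions with Dop slices
  have hcur1 : (fun x : ℝ => HH (x, 0)) = fun x => h x 0 := by rw [hHHdef]
  have hp1e : pu h = fun u => Dop (1, 0) HH (u, 0) := by
    funext u
    show deriv (fun x => h x 0) u = _
    rw [← hcur1]
    exact slice1 hsm' u 0
  have hp2e : pv h = fun u => Dop (0, 1) HH (u, 0) := by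
    funext u
    show deriv (fun y => h u y) 0 = _
    have hcur2 : (fun y : ℝ => HH (u, y)) = fun y => h u y := by rw [hHHdef]
    rw [← hcur2]
    exact slice2 hsm' u 0
  have hq11e : puu h = fun u => Dop (1, 0) (Dop (1, 0) HH) (u, 0) := by
    funext u
    show iteratedDeriv 2 (fun x => h x 0) u = _
    rw [iteratedDeriv_succ, iteratedDeriv_one, ← hcur1]
    have hin : deriv (fun x : ℝ => HH (x, 0)) = fun x => Dop (1, 0) HH (x, 0) :=
      funext fun x => slice1 hsm' x 0
    rw [hin]
    exact slice1 (Dop_smooth hsm' (1, 0)) u 0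
  have hq12e : puv h = fun u => Dop (1, 0) (Dop (0, 1) HH) (u, 0) := by
    funext u
    show deriv (fun y => deriv (fun x => h x y) u) 0 = _
    have hin2 : (fun y : ℝ => deriv (fun x => h x y) u) = fun y => Dop (1, 0) HH (u, y) := by
      funext y
      have hcur3 : (fun x : ℝ => HH (x, y)) = fun x => h x y := by rw [hHHdef]
      rw [← hcur3]
      exact slice1 hsm' u y
    rw [hin2, slice2 (Dop_smooth hsm' (1, 0)) u 0, Dop_swap hsm' (0, 1) (1, 0) (u, 0)]
  have hq22e : pvv h = fun u => Dop (0, 1) (Dop (0, 1) HH) (u, 0) := by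
    funext u
    show iteratedDeriv 2 (fun y => h u y) 0 = _
    rw [iteratedDeriv_succ, iteratedDeriv_one]
    have hcur2 : (fun y : ℝ => HH (u, y)) = fun y => h u y := by rw [hHHdef]
    rw [← hcur2]
    have hin : deriv (fun y : ℝ => HH (u, y)) = fun y => Dop (0, 1) HH (u, y) :=
      funext fun y => slice2 hsm' u y
    rw [hin]
    exact slice2 (Dop_smooth hsm' (0, 1)) u 0
  -- J2 data for the five slice functions
  have hp1J : J2 (pu h) 0 k₁ a := by
    have hs := J2_slice (Dop_smooth hsm' (1, 0))
    rw [hm10, hm20, hm30] at hs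
    rwa [← hp1e] at hs
  have hp2J : J2 (pv h) 0 0 d := by
    have hs := J2_slice (Dop_smooth hsm' (0, 1))
    rw [hm01, hm11, hm21] at hs
    rwa [← hp2e] at hs
  have hq11J : J2 (puu h) k₁ a A := by
    have hs := J2_slice (Dop_smooth (Dop_smooth hsm' (1, 0)) (1, 0))
    rw [hm20, hm30, hm40] at hs
    rwa [← hq11e] at hs
  have hq12J : J2 (puv h) 0 d B := by
    have hs := J2_slice (Dop_smooth (Dop_smooth hsm' (0, 1)) (1, 0))
    rw [hm11, hm21, hm31] at hs
    rwa [← hq12e] at hs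
  have hq22J : J2 (pvv h) k₂ b C := by
    have hs := J2_slice (Dop_smooth (Dop_smooth hsm' (0, 1)) (0, 1))
    rw [hm02, hm12, hm22] at hs
    rwa [← hq22e] at hs
  -- the area element W
  have hqsum : J2 (fun u => 1 + pu h u ^ 2 + pv h u ^ 2) 1 0 (2 * k₁ ^ 2) :=
    (((J2.const 1).add hp1J.pow2).add hp2J.pow2).vals (by norm_num) (by norm_num) (by ring)
  have hWpos : ∀ u, 0 < Wg h u := by
    intro u
    apply Real.sqrt_pos.mpr
    positivity
  have hWs : ContDiff ℝ (⊤ : ℕ∞) (Wg h) := by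
    have := hqsum.1.sqrt (fun u => by positivity)
    exact this
  have hW0 : Wg h 0 = 1 := by
    show Real.sqrt (1 + pu h 0 ^ 2 + pv h 0 ^ 2) = 1
    rw [hp1J.2.1, hp2J.2.1]
    norm_num
  have hWJ : J2 (Wg h) 1 (deriv (Wg h) 0) (deriv (deriv (Wg h)) 0) := ⟨hWs, hW0, rfl, rfl⟩
  have hWWfun : (fun u => Wg h u * Wg h u) = fun u => 1 + pu h u ^ 2 + pv h u ^ 2 :=
    funext fun u => Real.mul_self_sqrt (by positivity)
  have hWW := hWJ.mul hWJ
  rw [hWWfun] at hWW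
  have hw1 : deriv (Wg h) 0 = 0 := by
    have h1 := hWW.2.2.1
    have h2 := hqsum.2.2.1
    rw [h1] at h2
    linarith
  have hw2 : deriv (deriv (Wg h)) 0 = k₁ ^ 2 := by
    have h1 := hWW.2.2.2
    have h2 := hqsum.2.2.2
    rw [h1] at h2
    rw [hw1] at h2
    linarith
  have hWJ2 : J2 (Wg h) 1 0 (k₁ ^ 2) := hWJ.vals rfl hw1 hw2
  -- J2 of κ
  have hκJ : J2 κ k₁ (deriv κ 0) (deriv (deriv κ) 0) := ⟨hκ', hκ0, rfl, rfl⟩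
  -- assemble the polynomial eigenvalue identity
  have hEJ : J2 (fun u => 1 + pu h u ^ 2) 1 0 (2 * k₁ ^ 2) :=
    ((J2.const 1).add hp1J.pow2).vals (by norm_num) (by norm_num) (by ring)
  have hGJ : J2 (fun u => 1 + pv h u ^ 2) 1 0 0 :=
    ((J2.const 1).add hp2J.pow2).vals (by norm_num) (by norm_num) (by ring)
  have hFmJ : J2 (fun u => pu h u * pv h u) 0 0 0 :=
    (hp1J.mul hp2J).vals (by ring) (by ring) (by ring)
  have hP2J : J2 (fun u => (1 + pu h u ^ 2) * (1 + pv h u ^ 2) - (pu h u * pv h u) ^ 2)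
      1 0 (2 * k₁ ^ 2) :=
    ((hEJ.mul hGJ).sub hFmJ.pow2).vals (by ring) (by ring) (by ring)
  have hWWJ : J2 (fun u => Wg h u * Wg h u) 1 0 (2 * k₁ ^ 2) :=
    (hWJ2.mul hWJ2).vals (by ring) (by ring) (by ring)
  have hK2J : J2 (fun u => κ u ^ 2) (k₁ ^ 2) (2 * k₁ * deriv κ 0)
      (2 * k₁ * deriv (deriv κ) 0 + 2 * (deriv κ 0) ^ 2) :=
    hκJ.pow2.vals (by ring) (by ring) (by ring)
  have hT1J : J2 (fun u => ((1 + pu h u ^ 2) * (1 + pv h u ^ 2) - (pu h u * pv h u) ^ 2) *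
        (Wg h u * Wg h u) * κ u ^ 2)
      (k₁ ^ 2) (2 * k₁ * deriv κ 0)
      (4 * k₁ ^ 4 + 2 * (deriv κ 0) ^ 2 + 2 * k₁ * deriv (deriv κ) 0) :=
    ((hP2J.mul hWWJ).mul hK2J).vals (by ring) (by ring) (by ring)
  have hM1 : J2 (fun u => puu h u * (1 + pv h u ^ 2)) k₁ a A :=
    (hq11J.mul hGJ).vals (by ring) (by ring) (by ring)
  have hM2 : J2 (fun u => 2 * puv h u * (pu h u * pv h u)) 0 0 0 :=
    ((hq12J.const_mul 2).mul hFmJ).vals (by ring) (by ring) (by ring)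
  have hM3 : J2 (fun u => pvv h u * (1 + pu h u ^ 2)) k₂ b (C + 2 * k₁ ^ 2 * k₂) :=
    (hq22J.mul hEJ).vals (by ring) (by ring) (by ring)
  have hP1J : J2 (fun u => puu h u * (1 + pv h u ^ 2) - 2 * puv h u * (pu h u * pv h u)
        + pvv h u * (1 + pu h u ^ 2)) (k₁ + k₂) (a + b) (A + C + 2 * k₁ ^ 2 * k₂) :=
    ((hM1.sub hM2).add hM3).vals (by ring) (by ring) (by ring)
  have hPWJ : J2 (fun u => (puu h u * (1 + pv h u ^ 2) - 2 * puv h u * (pu h u * pv h u)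
        + pvv h u * (1 + pu h u ^ 2)) * Wg h u) (k₁ + k₂) (a + b)
      (A + C + 2 * k₁ ^ 2 * k₂ + (k₁ + k₂) * k₁ ^ 2) :=
    (hP1J.mul hWJ2).vals (by ring) (by ring) (by ring)
  have hT2J : J2 (fun u => (puu h u * (1 + pv h u ^ 2) - 2 * puv h u * (pu h u * pv h u)
        + pvv h u * (1 + pu h u ^ 2)) * Wg h u * κ u)
      ((k₁ + k₂) * k₁) ((a + b) * k₁ + (k₁ + k₂) * deriv κ 0)
      ((A + C + 2 * k₁ ^ 2 * k₂ + (k₁ + k₂) * k₁ ^ 2) * k₁ + 2 * (a + b) * deriv κ 0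
        + (k₁ + k₂) * deriv (deriv κ) 0) :=
    (hPWJ.mul hκJ).vals (by ring) (by ring) (by ring)
  have hT3J : J2 (fun u => puu h u * pvv h u - puv h u ^ 2)
      (k₁ * k₂) (a * k₂ + k₁ * b) (A * k₂ + 2 * a * b + k₁ * C - 2 * d ^ 2) :=
    ((hq11J.mul hq22J).sub hq12J.pow2).vals (by ring) (by ring) (by ring)
  have hFJ := (hT1J.sub hT2J).add hT3J
  have hzero : ∀ u : ℝ,
      ((1 + pu h u ^ 2) * (1 + pv h u ^ 2) - (pu h u * pv h u) ^ 2) *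
        (Wg h u * Wg h u) * κ u ^ 2 -
      (puu h u * (1 + pv h u ^ 2) - 2 * puv h u * (pu h u * pv h u)
        + pvv h u * (1 + pu h u ^ 2)) * Wg h u * κ u +
      (puu h u * pvv h u - puv h u ^ 2) = 0 := by
    intro u
    have e := heig u
    have hWne : Wg h u ≠ 0 := (hWpos u).ne'
    field_simp [hWne] at e
    have e3 : (Wg h u) ^ 3 *
        (((1 + pu h u ^ 2) * (1 + pv h u ^ 2) - (pu h u * pv h u) ^ 2) *
          (Wg h u * Wg h u) * κ u ^ 2 -
        (puu h u * (1 + pv h u ^ 2) - 2 * puv h u * (pu h u * pv h u)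
          + pvv h u * (1 + pu h u ^ 2)) * Wg h u * κ u +
        (puu h u * pvv h u - puv h u ^ 2)) = 0 := by linear_combination (Wg h u) ^ 3 * e
    exact (mul_eq_zero.mp e3).resolve_left (pow_ne_zero 3 hWne)
  obtain ⟨hc0, hc1, hc2⟩ := J2_zero_vals hFJ hzero
  -- first derivative: κ'(0) = a
  have hκ1 : deriv κ 0 = a := by
    have h9 : (k₁ - k₂) * (deriv κ 0 - a) = 0 := by linear_combination hc1
    have h10 := (mul_eq_zero.mp h9).resolve_left (sub_ne_zero.mpr hk)
    linarith
  have hne : k₁ - k₂ ≠ 0 := sub_ne_zero.mpr hk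
  -- second derivative
  have hκ2 : deriv (deriv κ) 0 = A - 3 * k₁ ^ 3 + 2 * d ^ 2 / (k₁ - k₂) := by
    rw [hκ1] at hc2
    field_simp
    linear_combination hc2
  refine ⟨?_, hκ1, by rw [hκ1], ?_⟩
  · -- the little-o expansion
    have hqd := quad_jets k₁ a (1/2 * (A - 3 * k₁ ^ 3 + 2 * d ^ 2 / (k₁ - k₂)))
    apply peano 2 _ (hκ'.sub hqd.1)
    intro k hkk
    have hsp : iteratedDeriv k (fun u : ℝ => κ u -
          (k₁ + a * u + 1/2 * (A - 3 * k₁ ^ 3 + 2 * d ^ 2 / (k₁ - k₂)) * u ^ 2)) 0 =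
        iteratedDeriv k κ 0 - iteratedDeriv k
          (fun u : ℝ => k₁ + a * u + 1/2 * (A - 3 * k₁ ^ 3 + 2 * d ^ 2 / (k₁ - k₂)) * u ^ 2) 0 :=
      congrFun (iterDeriv_sub hκ' hqd.1 k) 0
    rw [hsp]
    interval_cases k
    · rw [iteratedDeriv_zero, iteratedDeriv_zero, hκ0]
      norm_num
    · rw [iteratedDeriv_one, iteratedDeriv_one, hκ1, hqd.2.2.1]
      ring
    · rw [iteratedDeriv_succ, iteratedDeriv_one, iteratedDeriv_succ, iteratedDeriv_one,
        hκ2, hqd.2.2.2]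
      ring
  · -- the ridge invariant
    intro _
    have hit2 : iteratedDeriv 2 κ 0 = deriv (deriv κ) 0 := by
      rw [iteratedDeriv_succ, iteratedDeriv_one]
    rw [hit2, hκ2]
    field_simp


end
end
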